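/- Let A be a finite nonempty alphabet, E ⊆ W(A), and 𝐬 = (s_n(x))_{n=0}^∞ an infinite sequence of variable words over A such that E is large in 𝐬. Then there exist m ≥ 1, a variable word w(x) ∈ ⟨(s_n(x))_{n=0}^{m-1}⟩_v, and an infinite extracted subsequence 𝐭 of (s_n(x))_{n=m}^∞ such that, setting F = {w(a) : a ∈ A}, the set E ∩ E_F is large in 𝐭. -/

import Mathlib

/- Words over an alphabet are `List α`.  The variable symbol `x` is modelled by
`none : Option α`, and variable words are lists over `Option α` containing `none`. -/

namespace HJ

variable {α : Type*}

/-- Substitution of the letter `a` for every occurrence of the variable in a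
variable word, producing a constant word. -/
def substC (s : List (Option α)) (a : α) : List α :=
  s.map (fun b => b.getD a)

/-- Substitution of `b ∈ A ∪ {x}` (a letter `some a` or the variable `none`)
for every occurrence of the variable. -/
def substV (s : List (Option α)) (b : Option α) : List (Option α) :=
  s.map (fun c => Option.elim c b some)

/-- `s` is a variable word over the alphabet `S`: all its letters lie in `S`
and it contains at least one occurrence of the variable. -/
def IsVarWord (S : Set α) (s : List (Option α)) : Prop :=
  (∀ a : α, some a ∈ s → a ∈ S) ∧ none ∈ s

/-- `W(S)`: the set of (constant) words over the alphabet `S`. -/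
def WordsOver (S : Set α) : Set (List α) :=
  { w | ∀ a ∈ w, a ∈ S }

/-- The constant span of the sequence `s` of variable words, with indices
restricted to `I` and the letter substituted at position `l i` taken from the
alphabet `B (l i)`: all concatenations `s_{l_0}(a_0) ⋯ s_{l_n}(a_n)` with
`l_0 < ⋯ < l_n` in `I` and `a_i ∈ B (l_i)`. -/
def constSpan (B : ℕ → Set α) (s : ℕ → List (Option α)) (I : Set ℕ) :
    Set (List α) :=
  { w | ∃ (n : ℕ) (l : Fin (n + 1) → ℕ) (a : Fin (n + 1) → α),
      StrictMono l ∧ (∀ i, l i ∈ I) ∧ (∀ i, a i ∈ B (l i)) ∧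
      w = (List.ofFn fun i => substC (s (l i)) (a i)).flatten }

/-- The variable span of the sequence `s` of variable words, with indices
restricted to `I` and alphabets given by `B`: all concatenations
`s_{l_0}(b_0) ⋯ s_{l_n}(b_n)` with `l_0 < ⋯ < l_n` in `I` and
`b_i ∈ B (l_i) ∪ {x}` which contain at least one occurrence of the variable. -/
def varSpan (B : ℕ → Set α) (s : ℕ → List (Option α)) (I : Set ℕ) :
    Set (List (Option α)) :=
  { w | ∃ (n : ℕ) (l : Fin (n + 1) → ℕ) (b : Fin (n + 1) → Option α),
      StrictMono l ∧ (∀ i, l i ∈ I) ∧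
      (∀ i, ∀ a : α, b i = some a → a ∈ B (l i)) ∧
      none ∈ w ∧
      w = (List.ofFn fun i => substV (s (l i)) (b i)).flatten }

/-- `(t_0, …, t_l)` is a finite extracted subsequence of `s` (with alphabets `B`):
there are `0 = m_0 < m_1 < ⋯` with `t_i` in the variable span of
`(s_n)_{n = m_i}^{m_{i+1} - 1}` (with alphabets `B`) for all `i ≤ l`. -/
def ExtractedFin (B : ℕ → Set α) (s t : ℕ → List (Option α)) (l : ℕ) : Prop :=
  ∃ m : ℕ → ℕ, m 0 = 0 ∧ StrictMono m ∧
    ∀ i ≤ l, t i ∈ varSpan B s (Set.Ico (m i) (m (i + 1)))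

/-- `t` is an infinite extracted subsequence of `s` (with alphabets `B`). -/
def Extracted (B : ℕ → Set α) (s t : ℕ → List (Option α)) : Prop :=
  ∀ l : ℕ, ExtractedFin B s t l

/-- `E` is large in `s` (with alphabets `B`): `E` meets the constant span of
every infinite extracted subsequence of `s`. -/
def IsLarge (B : ℕ → Set α) (E : Set (List α)) (s : ℕ → List (Option α)) : Prop :=
  ∀ w : ℕ → List (Option α), Extracted B s w →
    (E ∩ constSpan B w Set.univ).Nonempty

/-- `E_F = {z ∈ W(S) : w ++ z ∈ E for every w ∈ F}`. -/
def wordQuot (S : Set α) (E F : Set (List α)) : Set (List α) :=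
  { z | z ∈ WordsOver S ∧ ∀ w ∈ F, w ++ z ∈ E }

end HJ

/-!
Suppose the conclusion fails. We then build an extracted subsequence `v` of `s` such that no word
`P ++ v_j(a)` lies in `E`, where `a ∈ A` and `P` is empty or in the constant span of
`v_0, …, v_{j-1}`. Every word of `⟨v⟩_c` has this form, so `E` is not large in `s`.

To choose `v_j` past the blocks of `s` already used, let `Q` be the finite set of admissible
prefixes `P`, and colour a word `z` by the set of pairs `(y, P)`, with `y` in the constant span of
the next `N` words of `s` and `P ∈ Q`, such that `P ++ y ++ z ∈ E`. There are finitely many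
colours, so a single colour class is large in some `t` extracted from the rest of `s`. Taking `N`
from the Hales–Jewett theorem for `2^Q` colours gives a variable word `w` whose substitutions
`w(a)` all select the same set of prefixes `P`. If that set contains some `P`, then `P ++ w` and
`t` witness the conclusion; if it is empty, `v_j := w ++ z` works for any `z` of the colour class
in `⟨t⟩_c`.
-/

namespace HJ

open Set

variable {α : Type*}

section Substitution

@[simp] theorem substV_none (u : List (Option α)) : substV u none = u := by
  simp only [substV]
  conv_rhs => rw [← List.map_id u]
  exact List.map_congr_left fun c _ => by cases c <;> rfl

theorem substV_substV (u : List (Option α)) (b c : Option α) :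
    substV (substV u b) c = substV u (b.elim c some) := by
  simp only [substV, List.map_map]
  exact List.map_congr_left fun d _ => by cases d <;> cases b <;> rfl

theorem substC_substV (u : List (Option α)) (b : Option α) (a : α) :
    substC (substV u b) a = substC u (b.getD a) := by
  simp only [substC, substV, List.map_map]
  exact List.map_congr_left fun d _ => by cases d <;> cases b <;> rfl

theorem substV_some (u : List (Option α)) (a : α) :
    substV u (some a) = (substC u a).map some := by
  simp only [substC, substV, List.map_map]
  exact List.map_congr_left fun d _ => by cases d <;> rfl

@[simp] theorem substC_map_some (w : List α) (a : α) : substC (w.map some) a = w := by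
  simp [substC]

@[simp] theorem substC_append (u v : List (Option α)) (a : α) :
    substC (u ++ v) a = substC u a ++ substC v a := List.map_append

theorem substC_flatten (M : List (List (Option α))) (a : α) :
    substC M.flatten a = (M.map (substC · a)).flatten := List.map_flatten

theorem substV_flatten (M : List (List (Option α))) (b : Option α) :
    substV M.flatten b = (M.map (substV · b)).flatten := List.map_flatten

end Substitution

section ListForm

variable {β γ : Type*}

/-- `constSpan` and `varSpan` index their terms by `Fin (n + 1)`; nonempty lists of
(index, letter) pairs with increasing indices carry the same data and compose more easily. -/
theorem exists_ofFn_iff_exists_list (g : ℕ → β → List γ) (P : ℕ → β → Prop) (I : Set ℕ)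
    (w : List γ) :
    (∃ (n : ℕ) (l : Fin (n + 1) → ℕ) (b : Fin (n + 1) → β),
        StrictMono l ∧ (∀ i, l i ∈ I) ∧ (∀ i, P (l i) (b i)) ∧
        w = (List.ofFn fun i => g (l i) (b i)).flatten) ↔
      ∃ L : List (ℕ × β), L ≠ [] ∧ (L.map Prod.fst).Pairwise (· < ·) ∧
        (∀ p ∈ L, p.1 ∈ I ∧ P p.1 p.2) ∧ w = (L.map fun p => g p.1 p.2).flatten := by
  constructor
  · rintro ⟨n, l, b, hl, hI, hP, rfl⟩
    refine ⟨List.ofFn fun i => (l i, b i), by simp, ?_, ?_, by rw [List.map_ofFn]; rfl⟩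
    · rw [List.map_ofFn]
      exact List.pairwise_ofFn.2 fun _ _ h => hl h
    · simp only [List.mem_ofFn, forall_exists_index]
      rintro _ i rfl
      exact ⟨hI i, hP i⟩
  · rintro ⟨_ | ⟨p, L⟩, hne, hL, hmem, rfl⟩
    · exact absurd rfl hne
    refine ⟨L.length, fun i => (p :: L)[i].1, fun i => (p :: L)[i].2, ?_, fun i => ?_,
      fun i => ?_, ?_⟩
    · intro i j hij
      exact List.pairwise_iff_getElem.1 (List.pairwise_map.1 hL) i j i.2 j.2 hij
    · exact (hmem _ (List.getElem_mem _)).1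
    · exact (hmem _ (List.getElem_mem _)).2
    · rw [← List.ofFn_getElem_eq_map]
      rfl

end ListForm

section WordSpan

def spanWord (s : ℕ → List (Option α)) (L : List (ℕ × Option α)) : List (Option α) :=
  (L.map fun p => substV (s p.1) p.2).flatten

/-- The span of `s` with letters from `A ∪ {x}`, without the requirement that the variable
occurs: `varSpan` and `constSpan` are both read off from it. -/
def wordSpan (A : Set α) (s : ℕ → List (Option α)) (I : Set ℕ) : Set (List (Option α)) :=
  {w | ∃ L : List (ℕ × Option α), L ≠ [] ∧ (L.map Prod.fst).Pairwise (· < ·) ∧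
    (∀ p ∈ L, p.1 ∈ I ∧ ∀ a, p.2 = some a → a ∈ A) ∧ w = spanWord s L}

variable {A : Set α} {s t : ℕ → List (Option α)} {I J : Set ℕ}

@[simp] theorem spanWord_nil : spanWord s [] = [] := rfl

@[simp] theorem spanWord_cons (p : ℕ × Option α) (L : List (ℕ × Option α)) :
    spanWord s (p :: L) = substV (s p.1) p.2 ++ spanWord s L := rfl

@[simp] theorem spanWord_append (L L' : List (ℕ × Option α)) :
    spanWord s (L ++ L') = spanWord s L ++ spanWord s L' := by
  simp [spanWord]

theorem substC_spanWord (L : List (ℕ × Option α)) (a : α) :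
    substC (spanWord s L) a = (L.map fun p => substC (s p.1) (p.2.getD a)).flatten := by
  simp [spanWord, substC_flatten, Function.comp_def, substC_substV]

theorem substV_spanWord (L : List (ℕ × Option α)) (b : Option α) :
    substV (spanWord s L) b = spanWord s (L.map fun p => (p.1, p.2.elim b some)) := by
  simp [spanWord, substV_flatten, Function.comp_def, substV_substV]

theorem wordSpan_mono (h : I ⊆ J) : wordSpan A s I ⊆ wordSpan A s J := by
  rintro w ⟨L, hne, hL, hmem, rfl⟩
  exact ⟨L, hne, hL, fun p hp => ⟨h (hmem p hp).1, (hmem p hp).2⟩, rfl⟩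

theorem mem_varSpan_iff {w : List (Option α)} :
    w ∈ varSpan (fun _ => A) s I ↔ w ∈ wordSpan A s I ∧ none ∈ w := by
  have key := exists_ofFn_iff_exists_list (fun l b => substV (s l) b)
    (fun _ b => ∀ a, b = some a → a ∈ A) I w
  constructor
  · rintro ⟨n, l, b, hl, hI, hb, hw, rfl⟩
    exact ⟨key.1 ⟨n, l, b, hl, hI, hb, rfl⟩, hw⟩
  · rintro ⟨hspan, hw⟩
    obtain ⟨n, l, b, hl, hI, hb, rfl⟩ := key.2 hspan
    exact ⟨n, l, b, hl, hI, hb, hw, rfl⟩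

theorem lt_of_mem_varSpan_Ico {B : ℕ → Set α} {c d : ℕ} {w : List (Option α)}
    (hw : w ∈ varSpan B s (Ico c d)) : c < d := by
  obtain ⟨_, _, _, _, hI, -⟩ := hw
  exact (hI 0).1.trans_lt (hI 0).2

theorem substC_mem_constSpan {w : List (Option α)} (hw : w ∈ wordSpan A s I) {a : α}
    (ha : a ∈ A) : substC w a ∈ constSpan (fun _ => A) s I := by
  obtain ⟨L, hne, hL, hmem, rfl⟩ := hw
  refine (exists_ofFn_iff_exists_list (fun l a => substC (s l) a) (fun _ a => a ∈ A) I _).2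
    ⟨L.map fun p => (p.1, p.2.getD a), by simpa using hne, by simpa [Function.comp_def] using hL,
      ?_, by simp [substC_spanWord, Function.comp_def]⟩
  simp only [List.mem_map, forall_exists_index, and_imp]
  rintro _ p hp rfl
  refine ⟨(hmem p hp).1, ?_⟩
  cases hb : p.2 with
  | none => exact ha
  | some b => exact (hmem p hp).2 b hb

theorem mem_constSpan_iff {z : List α} :
    z ∈ constSpan (fun _ => A) s I ↔ z.map some ∈ wordSpan A s I ∧ A.Nonempty := by
  refine ⟨fun hz => ?_, fun ⟨hz, a, ha⟩ => by simpa using substC_mem_constSpan hz ha⟩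
  obtain ⟨L, hne, hL, hmem, rfl⟩ :=
    (exists_ofFn_iff_exists_list (fun l a => substC (s l) a) (fun _ a => a ∈ A) I z).1 hz
  obtain ⟨p, hp⟩ := List.exists_mem_of_ne_nil L hne
  refine ⟨⟨L.map fun p => (p.1, some p.2), by simpa using hne,
    by simpa [Function.comp_def] using hL, ?_, ?_⟩, p.2, (hmem p hp).2⟩
  · simp only [List.mem_map, forall_exists_index, and_imp]
    rintro _ q hq rfl
    exact ⟨(hmem q hq).1, fun a ha => Option.some_inj.1 ha ▸ (hmem q hq).2⟩
  · simp [spanWord, List.map_flatten, Function.comp_def, substV_some]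

end WordSpan

section Composition

variable {A : Set α} {s t : ℕ → List (Option α)} {I J : Set ℕ}

theorem spanWord_flatMap (K : ℕ → List (ℕ × Option α)) (L : List (ℕ × Option α))
    (h : ∀ p ∈ L, t p.1 = spanWord s (K p.1)) :
    spanWord t L =
      spanWord s (L.flatMap fun p => (K p.1).map fun q => (q.1, q.2.elim p.2 some)) := by
  induction L with
  | nil => rfl
  | cons p L ih =>
    rw [spanWord_cons, List.flatMap_cons, spanWord_append, h p List.mem_cons_self,
      substV_spanWord, ih fun q hq => h q (List.mem_cons_of_mem p hq)]

theorem wordSpan_comp {μ : ℕ → ℕ} (hμ : Monotone μ) {n₁ n₂ : ℕ}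
    (ht : ∀ i ∈ Ico n₁ n₂, t i ∈ wordSpan A s (Ico (μ i) (μ (i + 1)))) :
    wordSpan A t (Ico n₁ n₂) ⊆ wordSpan A s (Ico (μ n₁) (μ n₂)) := by
  rintro w ⟨L, hne, hL, hmem, rfl⟩
  have hK : ∀ i, ∃ K : List (ℕ × Option α), i ∈ Ico n₁ n₂ → K ≠ [] ∧
      (K.map Prod.fst).Pairwise (· < ·) ∧
      (∀ q ∈ K, q.1 ∈ Ico (μ i) (μ (i + 1)) ∧ ∀ a, q.2 = some a → a ∈ A) ∧
      t i = spanWord s K := fun i => by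
    by_cases hi : i ∈ Ico n₁ n₂
    · obtain ⟨K, hK⟩ := ht i hi
      exact ⟨K, fun _ => hK⟩
    · exact ⟨[], fun h => absurd h hi⟩
  choose K hK using hK
  have hKL : ∀ p ∈ L, _ := fun p hp => hK p.1 (hmem p hp).1
  refine ⟨_, ?_, ?_, ?_, spanWord_flatMap K L fun p hp => (hKL p hp).2.2.2⟩
  · obtain ⟨p, hp⟩ := List.exists_mem_of_ne_nil L hne
    obtain ⟨q, hq⟩ := List.exists_mem_of_ne_nil _ (hKL p hp).1
    exact List.ne_nil_of_mem (List.mem_flatMap.2 ⟨p, hp, List.mem_map_of_mem hq⟩)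
  · simp only [List.map_flatMap, List.map_map, Function.comp_def, List.pairwise_flatMap]
    refine ⟨fun p hp => (hKL p hp).2.1, (List.pairwise_map.1 hL).imp_of_mem ?_⟩
    intro p p' hp hp' hlt _ hx _ hy
    obtain ⟨q, hq, rfl⟩ := List.mem_map.1 hx
    obtain ⟨q', hq', rfl⟩ := List.mem_map.1 hy
    have h₁ := ((hKL p hp).2.2.1 q hq).1.2
    have h₂ := ((hKL p' hp').2.2.1 q' hq').1.1
    have h₃ := hμ (Nat.succ_le_of_lt hlt)
    exact h₁.trans_le (h₃.trans h₂)
  · simp only [List.mem_flatMap, List.mem_map]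
    rintro _ ⟨p, hp, q, hq, rfl⟩
    obtain ⟨⟨hq₁, hq₂⟩, hqA⟩ := (hKL p hp).2.2.1 q hq
    obtain ⟨⟨hp₁, hp₂⟩, hpA⟩ := hmem p hp
    refine ⟨⟨(hμ hp₁).trans hq₁, hq₂.trans_le (hμ (Nat.succ_le_of_lt hp₂))⟩, fun a ha => ?_⟩
    cases hb : q.2 with
    | none => exact hpA a (by simpa [hb] using ha)
    | some b => exact (by simpa [hb] using ha : b = a) ▸ hqA b hb

theorem wordSpan_append (hIJ : ∀ i ∈ I, ∀ j ∈ J, i < j) {w w' : List (Option α)}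
    (hw : w ∈ wordSpan A s I) (hw' : w' ∈ wordSpan A s J) : w ++ w' ∈ wordSpan A s (I ∪ J) := by
  obtain ⟨L, hne, hL, hmem, rfl⟩ := hw
  obtain ⟨L', -, hL', hmem', rfl⟩ := hw'
  refine ⟨L ++ L', by simp [hne], ?_, ?_, (spanWord_append L L').symm⟩
  · rw [List.map_append, List.pairwise_append]
    refine ⟨hL, hL', ?_⟩
    simp only [List.mem_map]
    rintro _ ⟨p, hp, rfl⟩ _ ⟨p', hp', rfl⟩
    exact hIJ _ (hmem p hp).1 _ (hmem' p' hp').1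
  · intro p hp
    rcases List.mem_append.1 hp with hp | hp
    · exact ⟨Or.inl (hmem p hp).1, (hmem p hp).2⟩
    · exact ⟨Or.inr (hmem' p hp).1, (hmem' p hp).2⟩

theorem varSpan_comp {μ : ℕ → ℕ} (hμ : Monotone μ) {n₁ n₂ : ℕ}
    (ht : ∀ i ∈ Ico n₁ n₂, t i ∈ varSpan (fun _ => A) s (Ico (μ i) (μ (i + 1)))) :
    varSpan (fun _ => A) t (Ico n₁ n₂) ⊆ varSpan (fun _ => A) s (Ico (μ n₁) (μ n₂)) := by
  intro w hw
  rw [mem_varSpan_iff] at hw ⊢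
  exact ⟨wordSpan_comp hμ (fun i hi => (mem_varSpan_iff.1 (ht i hi)).1) hw.1, hw.2⟩

theorem constSpan_comp {μ : ℕ → ℕ} (hμ : Monotone μ) {n₁ n₂ : ℕ}
    (ht : ∀ i ∈ Ico n₁ n₂, t i ∈ varSpan (fun _ => A) s (Ico (μ i) (μ (i + 1)))) :
    constSpan (fun _ => A) t (Ico n₁ n₂) ⊆ constSpan (fun _ => A) s (Ico (μ n₁) (μ n₂)) := by
  intro z hz
  rw [mem_constSpan_iff] at hz ⊢
  exact ⟨wordSpan_comp hμ (fun i hi => (mem_varSpan_iff.1 (ht i hi)).1) hz.1, hz.2⟩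

theorem constSpan_mono (h : I ⊆ J) : constSpan (fun _ => A) s I ⊆ constSpan (fun _ => A) s J :=
  fun _ hz => mem_constSpan_iff.2 ⟨wordSpan_mono h (mem_constSpan_iff.1 hz).1,
    (mem_constSpan_iff.1 hz).2⟩

theorem varSpan_mono (h : I ⊆ J) : varSpan (fun _ => A) s I ⊆ varSpan (fun _ => A) s J :=
  fun _ hw => mem_varSpan_iff.2 ⟨wordSpan_mono h (mem_varSpan_iff.1 hw).1,
    (mem_varSpan_iff.1 hw).2⟩

theorem append_map_some_mem_varSpan {M K R : ℕ} (hMK : M ≤ K) (hKR : K ≤ R)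
    {w : List (Option α)} (hw : w ∈ varSpan (fun _ => A) s (Ico M K)) {z : List α}
    (hz : z ∈ constSpan (fun _ => A) s (Ico K R)) :
    w ++ z.map some ∈ varSpan (fun _ => A) s (Ico M R) := by
  refine mem_varSpan_iff.2 ⟨?_, List.mem_append_left _ (mem_varSpan_iff.1 hw).2⟩
  rw [← Set.Ico_union_Ico_eq_Ico hMK hKR]
  exact wordSpan_append (fun _ hi _ hj => hi.2.trans_le hj.1) (mem_varSpan_iff.1 hw).1
    (mem_constSpan_iff.1 hz).1

theorem map_some_append_mem_varSpan {M K : ℕ} {P : List α}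
    (hP : P ∈ insert [] (constSpan (fun _ => A) s (Iio M))) {w : List (Option α)}
    (hw : w ∈ varSpan (fun _ => A) s (Ico M K)) :
    P.map some ++ w ∈ varSpan (fun _ => A) s (Iio K) := by
  rcases hP with rfl | hP
  · exact varSpan_mono (fun _ hj => hj.2) hw
  refine mem_varSpan_iff.2 ⟨wordSpan_mono ?_ (wordSpan_append (fun _ hi _ hj => hi.trans_le hj.1)
    (mem_constSpan_iff.1 hP).1 (mem_varSpan_iff.1 hw).1),
    List.mem_append_right _ (mem_varSpan_iff.1 hw).2⟩
  rintro j (hj | hj)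
  · exact hj.trans (lt_of_mem_varSpan_Ico hw)
  · exact hj.2

end Composition

section ConstSpan

variable {A : Set α} {s : ℕ → List (Option α)} {I : Set ℕ}

theorem exists_eq_append_of_mem_constSpan {z : List α} (hz : z ∈ constSpan (fun _ => A) s I) :
    ∃ j ∈ I, ∃ P ∈ insert [] (constSpan (fun _ => A) s (I ∩ Iio j)), ∃ a ∈ A,
      z = P ++ substC (s j) a := by
  obtain ⟨⟨L, hne, hL, hmem, hz⟩, a, ha⟩ := mem_constSpan_iff.1 hz
  obtain ⟨L, p, rfl⟩ := (List.eq_nil_or_concat' _).resolve_left hne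
  rw [List.map_append, List.pairwise_append] at hL
  have hlast : p.1 ∈ I ∧ ∀ b, p.2 = some b → b ∈ A := hmem p (by simp)
  refine ⟨p.1, hlast.1, substC (spanWord s L) a, ?_, p.2.getD a, ?_, ?_⟩
  · rcases eq_or_ne L [] with rfl | hL₀
    · exact Set.mem_insert _ _
    refine Set.mem_insert_of_mem _ (substC_mem_constSpan ⟨L, hL₀, hL.1, fun q hq => ?_, rfl⟩ ha)
    have hq' := hmem q (List.mem_append_left _ hq)
    exact ⟨⟨hq'.1, hL.2.2 _ (List.mem_map_of_mem hq) _ (by simp)⟩, hq'.2⟩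
  · cases hb : p.2 with
    | none => exact ha
    | some b => exact hlast.2 b hb
  · rw [← substC_map_some z a, hz, spanWord_append, substC_append]
    simp [substC_substV]

theorem constSpan_Iio_finite (hA : A.Finite) (n : ℕ) :
    (constSpan (fun _ => A) s (Iio n)).Finite := by
  induction n with
  | zero =>
    refine Set.finite_empty.subset fun z hz => ?_
    obtain ⟨j, hj, -⟩ := exists_eq_append_of_mem_constSpan hz
    exact absurd hj (Nat.not_lt_zero j)
  | succ n ih =>
    refine ((ih.insert []).image2 (· ++ ·) ((Set.finite_Iio (n + 1)).biUnion
      fun j _ => hA.image (substC (s j)))).subset fun z hz => ?_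
    obtain ⟨j, hj, P, hP, a, ha, rfl⟩ := exists_eq_append_of_mem_constSpan hz
    refine ⟨P, ?_, substC (s j) a, Set.mem_biUnion hj ⟨a, ha, rfl⟩, rfl⟩
    refine Set.insert_subset_insert (constSpan_mono fun i hi => ?_) hP
    exact Nat.lt_of_lt_of_le hi.2 (Nat.lt_succ_iff.1 hj)

end ConstSpan

theorem Ico_zero_eq_Iio (n : ℕ) : Ico 0 n = Iio n := Set.Ico_bot

section Extraction

variable {A : Set α} {s t u : ℕ → List (Option α)} {I : Set ℕ}

theorem none_mem_of_mem_varSpan {B : ℕ → Set α} {w : List (Option α)}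
    (hw : w ∈ varSpan B s I) : none ∈ w := by
  obtain ⟨_, _, _, _, _, _, hnone, _⟩ := hw
  exact hnone

theorem self_mem_varSpan {B : ℕ → Set α} {k : ℕ} (hk : k ∈ I) (hs : none ∈ s k) :
    s k ∈ varSpan B s I :=
  ⟨0, fun _ => k, fun _ => none, Subsingleton.strictMono (α := Fin 1) _, fun _ => hk, by simp, hs,
    by simp⟩

theorem exists_Iio_of_mem_constSpan_univ {B : ℕ → Set α} {z : List α}
    (hz : z ∈ constSpan B s univ) :
    ∃ n, z ∈ constSpan B s (Iio n) := by
  obtain ⟨n, l, a, hl, -, ha, rfl⟩ := hz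
  exact ⟨l (Fin.last n) + 1, n, l, a, hl,
    fun i => Nat.lt_succ_of_le (hl.monotone (Fin.le_last i)), ha, rfl⟩

theorem constSpan_shift (K n : ℕ) :
    constSpan (fun _ => A) (fun k => s (K + k)) (Iio n) ⊆
      constSpan (fun _ => A) s (Ico K (K + n)) := by
  rintro z ⟨m, l, a, hl, hI, ha, rfl⟩
  exact ⟨m, fun i => K + l i, a, fun i j h => Nat.add_lt_add_left (hl h) K,
    fun i => ⟨Nat.le_add_right K _, Nat.add_lt_add_left (hI i) K⟩, ha, rfl⟩

theorem Extracted.none_mem {B : ℕ → Set α} (h : Extracted B s t) (i : ℕ) : none ∈ t i := by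
  obtain ⟨m, -, -, hm⟩ := h i
  exact none_mem_of_mem_varSpan (hm i le_rfl)

theorem extracted_comp_strictMono (hu : ∀ i, none ∈ u i) {φ : ℕ → ℕ} (hφ : StrictMono φ) :
    Extracted (fun _ => A) u fun i => u (φ i) := by
  intro l
  have hle : ∀ i, (if i = 0 then 0 else φ (i - 1) + 1) ≤ φ i := fun i => by
    split_ifs with hi
    · exact Nat.zero_le _
    · exact hφ (by omega)
  refine ⟨fun i => if i = 0 then 0 else φ (i - 1) + 1, rfl,
    strictMono_nat_of_lt_succ fun i => ?_, fun i _ => self_mem_varSpan ⟨hle i, ?_⟩ (hu _)⟩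
  · simpa using Nat.lt_succ_of_le (hle i)
  · simp

theorem extracted_refl (hu : ∀ i, none ∈ u i) : Extracted (fun _ => A) u u :=
  extracted_comp_strictMono hu strictMono_id

theorem Extracted.trans (h₁ : Extracted (fun _ => A) s u) (h₂ : Extracted (fun _ => A) u t) :
    Extracted (fun _ => A) s t := by
  intro l
  obtain ⟨m, hm0, hm, hmem⟩ := h₂ l
  obtain ⟨m', hm'0, hm', hmem'⟩ := h₁ (m (l + 1))
  refine ⟨m' ∘ m, by simp [hm0, hm'0], hm'.comp hm, fun i hi => ?_⟩
  refine varSpan_comp hm'.monotone (fun k hk => hmem' k ?_) (hmem i hi)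
  exact (hk.2.trans_le (hm.monotone (Nat.succ_le_succ hi))).le

theorem Extracted.exists_mem_constSpan_Iio (h : Extracted (fun _ => A) u t) {z : List α}
    (hz : z ∈ constSpan (fun _ => A) t univ) : ∃ n, z ∈ constSpan (fun _ => A) u (Iio n) := by
  obtain ⟨n, hn⟩ := exists_Iio_of_mem_constSpan_univ hz
  obtain ⟨m, hm0, hm, hmem⟩ := h n
  rw [← Ico_zero_eq_Iio] at hn
  have hcomp := constSpan_comp hm.monotone (fun i hi => hmem i hi.2.le) hn
  rw [hm0, Ico_zero_eq_Iio] at hcomp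
  exact ⟨m n, hcomp⟩

theorem Extracted.constSpan_subset (h : Extracted (fun _ => A) u t) :
    constSpan (fun _ => A) t univ ⊆ constSpan (fun _ => A) u univ := fun _ hz =>
  let ⟨_, hn⟩ := h.exists_mem_constSpan_Iio hz
  constSpan_mono (subset_univ _) hn

end Extraction

section Largeness

variable {A : Set α} {E E₁ E₂ : Set (List α)} {s u : ℕ → List (Option α)}

theorem IsLarge.mono {B : ℕ → Set α} {E' : Set (List α)} (h : IsLarge B E s) (hE : E ⊆ E') :
    IsLarge B E' s :=
  fun w hw => (h w hw).mono (Set.inter_subset_inter_left _ hE)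

theorem IsLarge.of_extracted (h : IsLarge (fun _ => A) E s) (hu : Extracted (fun _ => A) s u) :
    IsLarge (fun _ => A) E u :=
  fun w hw => h w (hu.trans hw)

theorem IsLarge.exists_of_union (hu : ∀ i, none ∈ u i) (h : IsLarge (fun _ => A) (E₁ ∪ E₂) u) :
    (∃ t, Extracted (fun _ => A) u t ∧ IsLarge (fun _ => A) E₁ t) ∨
      ∃ t, Extracted (fun _ => A) u t ∧ IsLarge (fun _ => A) E₂ t := by
  by_cases h₁ : IsLarge (fun _ => A) E₁ u
  · exact Or.inl ⟨u, extracted_refl hu, h₁⟩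
  simp only [IsLarge, not_forall] at h₁
  obtain ⟨w, hw, hE₁w⟩ := h₁
  refine Or.inr ⟨w, hw, fun v hv => ?_⟩
  obtain ⟨z, hzE | hzE, hzv⟩ := h v (hw.trans hv)
  · exact (hE₁w ⟨z, hzE, hv.constSpan_subset hzv⟩).elim
  · exact ⟨z, hzE, hzv⟩

theorem IsLarge.exists_of_biUnion {ι : Type*} {S : Set ι} (hS : S.Finite)
    {F : ι → Set (List α)} (hu : ∀ i, none ∈ u i) (h : IsLarge (fun _ => A) (⋃ i ∈ S, F i) u) :
    ∃ i ∈ S, ∃ t, Extracted (fun _ => A) u t ∧ IsLarge (fun _ => A) (F i) t := by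
  induction S, hS using Set.Finite.induction_on generalizing u with
  | empty =>
    obtain ⟨z, hz, -⟩ := h u (extracted_refl hu)
    simp at hz
  | @insert a S _ _ ih =>
    rw [Set.biUnion_insert] at h
    rcases h.exists_of_union hu with ⟨t, ht, hl⟩ | ⟨t, ht, hl⟩
    · exact ⟨a, Set.mem_insert a S, t, ht, hl⟩
    · obtain ⟨i, hi, t', ht', hl'⟩ := ih ht.none_mem hl
      exact ⟨i, Set.mem_insert_of_mem a hi, t', ht.trans ht', hl'⟩

end Largeness

section HalesJewett

variable {A : Set α} {s : ℕ → List (Option α)}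

theorem exists_mono_varSpan (hA : A.Finite) {κ : Type*} {K : Set κ} (hK : K.Finite)
    (hs : ∀ n, none ∈ s n) :
    ∃ N, ∀ M (C : List α → κ), (∀ y, C y ∈ K) →
      ∃ w ∈ varSpan (fun _ => A) s (Ico M (M + N)), ∃ c ∈ K, ∀ a ∈ A, C (substC w a) = c := by
  have := hA.to_subtype
  have := hK.to_subtype
  obtain ⟨N, hN⟩ := Combinatorics.Subspace.exists_mono_in_high_dimension_fin A K Unit
  refine ⟨N, fun M C hC => ?_⟩
  obtain ⟨l, c, hc⟩ := hN fun x => ⟨C (List.ofFn fun k => substC (s (M + k)) (x k)).flatten, hC _⟩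
  obtain ⟨k₀, hk₀⟩ := l.proper ()
  obtain ⟨n, rfl⟩ : ∃ n, N = n + 1 := Nat.exists_eq_succ_of_ne_zero k₀.pos.ne'
  let b : Fin (n + 1) → Option α := fun k => (l.idxFun k).elim (fun a => some a.1) fun _ => none
  refine ⟨(List.ofFn fun k => substV (s (M + k)) (b k)).flatten,
    ⟨n, fun k => M + k, b, fun i j h => Nat.add_lt_add_left h M,
      fun k => ⟨Nat.le_add_right M k, Nat.add_lt_add_left k.2 M⟩, fun k a hb => ?_, ?_, rfl⟩,
    c, c.2, fun a ha => ?_⟩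
  · cases hk : l.idxFun k with
    | inl a' => simp only [b, hk, Sum.elim_inl, Option.some_inj] at hb; exact hb ▸ a'.2
    | inr _ => simp [b, hk] at hb
  · refine List.mem_flatten.2 ⟨_, List.mem_ofFn.2 ⟨k₀, rfl⟩, ?_⟩
    simpa [b, hk₀] using hs (M + k₀)
  · rw [← congrArg Subtype.val (hc fun _ => ⟨a, ha⟩), substC_flatten, List.map_ofFn]
    congr 3
    funext k
    cases hk : l.idxFun k <;> simp [b, hk, substC_substV, Combinatorics.Subspace.coe_apply]

end HalesJewett

def ExistsLargeQuotient (A : Set α) (E : Set (List α)) (s : ℕ → List (Option α)) : Prop :=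
  ∃ m : ℕ, 1 ≤ m ∧ ∃ w ∈ varSpan (fun _ => A) s (Iio m), ∃ t : ℕ → List (Option α),
    Extracted (fun _ => A) (fun n => s (m + n)) t ∧
    IsLarge (fun _ => A) (E ∩ wordQuot A E (substC w '' A)) t

section Step

variable {A : Set α} {E : Set (List α)} {s : ℕ → List (Option α)}

theorem existsLargeQuotient_or_exists_avoiding (hA : A.Finite) (hE : E ⊆ WordsOver A)
    (hs : ∀ n, none ∈ s n) (hlarge : IsLarge (fun _ => A) E s) {Q : Set (List α)}
    (hQ : Q.Finite) {M : ℕ} (hQM : Q ⊆ insert [] (constSpan (fun _ => A) s (Iio M))) :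
    ExistsLargeQuotient A E s ∨ ∃ x R, x ∈ varSpan (fun _ => A) s (Ico M R) ∧
      ∀ P ∈ Q, ∀ a ∈ A, P ++ substC x a ∉ E := by
  obtain ⟨N, hN⟩ := exists_mono_varSpan hA hQ.finite_subsets hs
  set Y := constSpan (fun _ => A) s (Ico M (M + N))
  have hY : Y.Finite :=
    (constSpan_Iio_finite hA (M + N)).subset (constSpan_mono fun _ hi => hi.2)
  let f : List α → Set (List α × List α) := fun z => {p ∈ Y ×ˢ Q | p.2 ++ p.1 ++ z ∈ E}
  have hcover : E ⊆ ⋃ i ∈ {i | i ⊆ Y ×ˢ Q}, {z ∈ E | f z = i} :=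
    fun z hz => Set.mem_biUnion (Set.sep_subset _ _) ⟨hz, rfl⟩
  have hlargeN : IsLarge (fun _ => A) E fun k => s (M + N + k) :=
    hlarge.of_extracted (extracted_comp_strictMono hs (strictMono_id.const_add (M + N)))
  obtain ⟨i, hi, t, ht, htlarge⟩ :=
    (hlargeN.mono hcover).exists_of_biUnion (hY.prod hQ).finite_subsets fun _ => hs _
  obtain ⟨w, hw, c, hcQ, hc⟩ := hN M (fun y => {P | (y, P) ∈ i}) fun y _ hP => (hi hP).2
  have hwY : ∀ a ∈ A, substC w a ∈ Y := fun a ha =>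
    substC_mem_constSpan (mem_varSpan_iff.1 hw).1 ha
  rcases c.eq_empty_or_nonempty with rfl | ⟨P, hP⟩
  · right
    obtain ⟨z, ⟨-, hfz⟩, hzt⟩ := htlarge t (extracted_refl ht.none_mem)
    obtain ⟨R, hR⟩ := ht.exists_mem_constSpan_Iio hzt
    refine ⟨w ++ z.map some, M + N + R, ?_, fun P hP a ha hPE => ?_⟩
    · exact append_map_some_mem_varSpan (Nat.le_add_right M N) (Nat.le_add_right _ R) hw
        (constSpan_shift (M + N) R hR)
    · have hPi : (substC w a, P) ∈ i :=
        hfz ▸ ⟨⟨hwY a ha, hP⟩, by simpa [List.append_assoc] using hPE⟩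
      exact (hc a ha ▸ hPi : P ∈ (∅ : Set (List α)))
  · left
    refine ⟨M + N, (Nat.zero_le M).trans_lt (lt_of_mem_varSpan_Ico hw), P.map some ++ w,
      map_some_append_mem_varSpan (hQM (hcQ hP)) hw, t, ht, htlarge.mono ?_⟩
    rintro z ⟨hzE, hfz⟩
    refine ⟨hzE, hE hzE, ?_⟩
    rintro _ ⟨a, ha, rfl⟩
    rw [← hc a ha, ← hfz] at hP
    simpa [List.append_assoc] using hP.2

end Step

theorem exists_seq_of_step {β : Type*} [Inhabited β] (P : (ℕ → β) → ℕ → Prop)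
    (h0 : ∀ v, P v 0)
    (hstep : ∀ v n, P v n → ∃ x, ∀ v', (∀ i < n, v' i = v i) → v' n = x → P v' (n + 1)) :
    ∃ v, ∀ n, P v n := by
  classical
  let next : (ℕ → β) → ℕ → β := fun v n => if h : P v n then (hstep v n h).choose else default
  -- `q n` agrees with the sequence under construction below `n`
  let q : ℕ → ℕ → β := fun n => Nat.rec (fun _ => default)
    (fun n v i => if i < n then v i else next v n) n
  have hq_succ : ∀ n i, q (n + 1) i = if i < n then q n i else next (q n) n := fun _ _ => rfl
  have hq : ∀ n, P (q n) n := by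
    intro n
    induction n with
    | zero => exact h0 _
    | succ n ih =>
      refine (hstep (q n) n ih).choose_spec _ (fun i hi => by rw [hq_succ, if_pos hi]) ?_
      rw [hq_succ, if_neg (lt_irrefl n)]
      exact dif_pos ih
  have hcoh : ∀ n, ∀ i < n, q n i = q (i + 1) i := by
    intro n
    induction n with
    | zero => exact fun i hi => absurd hi (Nat.not_lt_zero i)
    | succ n ih =>
      intro i hi
      rcases Nat.lt_succ_iff_lt_or_eq.1 hi with hi | rfl
      · rw [hq_succ, if_pos hi, ih i hi]
      · rfl
  refine ⟨fun i => q (i + 1) i, fun n => ?_⟩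
  cases n with
  | zero => exact h0 _
  | succ n =>
    refine (hstep (q n) n (hq n)).choose_spec _ (fun i hi => (hcoh n i hi).symm) ?_
    show q (n + 1) n = _
    rw [hq_succ, if_neg (lt_irrefl n)]
    exact dif_pos (hq n)

section Iteration

variable {A : Set α} {E : Set (List α)} {s v : ℕ → List (Option α)}

theorem constSpan_congr {B : ℕ → Set α} {t : ℕ → List (Option α)} {I : Set ℕ}
    (h : ∀ i ∈ I, s i = t i) : constSpan B s I = constSpan B t I := by
  ext z
  constructor <;> rintro ⟨n, l, a, hl, hI, ha, rfl⟩ <;> refine ⟨n, l, a, hl, hI, ha, ?_⟩ <;>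
    simp only [fun i => h (l i) (hI i)]

def BlockPrefix (A : Set α) (s v : ℕ → List (Option α)) (n : ℕ) : Prop :=
  ∃ μ : ℕ → ℕ, μ 0 = 0 ∧ StrictMono μ ∧
    ∀ i < n, v i ∈ varSpan (fun _ => A) s (Ico (μ i) (μ (i + 1)))

def AvoidsAt (A : Set α) (E : Set (List α)) (v : ℕ → List (Option α)) (j : ℕ) : Prop :=
  ∀ P ∈ insert [] (constSpan (fun _ => A) v (Iio j)), ∀ a ∈ A, P ++ substC (v j) a ∉ E

theorem blockPrefix_zero : BlockPrefix A s v 0 :=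
  ⟨id, rfl, strictMono_id, fun i hi => absurd hi (Nat.not_lt_zero i)⟩

theorem BlockPrefix.extractedFin {l : ℕ} (h : BlockPrefix A s v (l + 1)) :
    ExtractedFin (fun _ => A) s v l :=
  let ⟨μ, hμ0, hμ, hv⟩ := h
  ⟨μ, hμ0, hμ, fun i hi => hv i (Nat.lt_succ_of_le hi)⟩

theorem blockPrefix_succ {n : ℕ} {μ : ℕ → ℕ} (hμ0 : μ 0 = 0) (hμ : StrictMono μ)
    (hv : ∀ i < n, v i ∈ varSpan (fun _ => A) s (Ico (μ i) (μ (i + 1)))) {R : ℕ}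
    (hn : v n ∈ varSpan (fun _ => A) s (Ico (μ n) R)) : BlockPrefix A s v (n + 1) := by
  have hR := lt_of_mem_varSpan_Ico hn
  refine ⟨fun i => if i ≤ n then μ i else R + i, by simp [hμ0],
    strictMono_nat_of_lt_succ fun i => ?_, fun i hi => ?_⟩
  · show (if i ≤ n then μ i else R + i) < if i + 1 ≤ n then μ (i + 1) else R + (i + 1)
    split_ifs with h₁ h₂ h₂
    · exact hμ i.lt_succ_self
    · obtain rfl : i = n := by omega
      omega
    · omega
    · omega
  · show v i ∈ varSpan _ s (Ico (if i ≤ n then μ i else R + i)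
      (if i + 1 ≤ n then μ (i + 1) else R + (i + 1)))
    rcases Nat.lt_succ_iff_lt_or_eq.1 hi with hi | rfl
    · rw [if_pos hi.le, if_pos (Nat.succ_le_of_lt hi)]
      exact hv i hi
    · rw [if_pos le_rfl, if_neg (by omega)]
      exact varSpan_mono (Set.Ico_subset_Ico_right (by omega)) hn

theorem exists_avoiding_extension (hcon : ¬ ExistsLargeQuotient A E s) (hA : A.Finite)
    (hE : E ⊆ WordsOver A) (hs : ∀ n, none ∈ s n) (hlarge : IsLarge (fun _ => A) E s) {n : ℕ}
    (hv : BlockPrefix A s v n) (havoid : ∀ j < n, AvoidsAt A E v j) :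
    ∃ x, ∀ v', (∀ i < n, v' i = v i) → v' n = x →
      BlockPrefix A s v' (n + 1) ∧ ∀ j < n + 1, AvoidsAt A E v' j := by
  obtain ⟨μ, hμ0, hμ, hvμ⟩ := hv
  have hQM : insert [] (constSpan (fun _ => A) v (Iio n)) ⊆
      insert [] (constSpan (fun _ => A) s (Iio (μ n))) := by
    refine Set.insert_subset_insert ?_
    have hcomp := constSpan_comp (n₁ := 0) hμ.monotone fun i hi => hvμ i hi.2
    rwa [hμ0, Ico_zero_eq_Iio, Ico_zero_eq_Iio] at hcomp
  obtain ⟨x, R, hx, hxE⟩ := (existsLargeQuotient_or_exists_avoiding hA hE hs hlarge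
    ((constSpan_Iio_finite hA n).insert []) hQM).resolve_left hcon
  refine ⟨x, fun v' hv' hv'n => ⟨blockPrefix_succ hμ0 hμ (fun i hi => hv' i hi ▸ hvμ i hi)
    (hv'n ▸ hx), fun j hj P hP a ha => ?_⟩⟩
  have hprefix : constSpan (fun _ => A) v' (Iio j) = constSpan (fun _ => A) v (Iio j) :=
    constSpan_congr fun i hi => hv' i (Nat.lt_of_lt_of_le hi (Nat.lt_succ_iff.1 hj))
  rw [hprefix] at hP
  rcases Nat.lt_succ_iff_lt_or_eq.1 hj with hj | rfl
  · exact hv' j hj ▸ havoid j hj P hP a ha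
  · exact hv'n ▸ hxE P hP a ha

theorem inter_constSpan_eq_empty_of_avoidsAt (h : ∀ j, AvoidsAt A E v j) :
    E ∩ constSpan (fun _ => A) v univ = ∅ := by
  refine Set.eq_empty_of_forall_notMem fun z ⟨hzE, hz⟩ => ?_
  obtain ⟨j, -, P, hP, a, ha, rfl⟩ := exists_eq_append_of_mem_constSpan hz
  rw [Set.univ_inter] at hP
  exact h j P hP a ha hzE

end Iteration

end HJ

open HJ in
theorem stmt7_general {α : Type*} (A : Finset α)
    (E : Set (List α)) (hE : E ⊆ WordsOver (A : Set α))
    (s : ℕ → List (Option α)) (hs : ∀ n, IsVarWord (A : Set α) (s n))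
    (hlarge : IsLarge (fun _ => (A : Set α)) E s) :
    ∃ m : ℕ, 1 ≤ m ∧
      ∃ w ∈ varSpan (fun _ => (A : Set α)) s (Set.Iio m),
        ∃ t : ℕ → List (Option α),
          Extracted (fun _ => (A : Set α)) (fun n => s (m + n)) t ∧
          IsLarge (fun _ => (A : Set α))
            (E ∩ wordQuot (A : Set α) E (substC w '' (A : Set α))) t := by
  by_contra hcon
  obtain ⟨v, hv⟩ := exists_seq_of_step
    (fun v n => BlockPrefix (A : Set α) s v n ∧ ∀ j < n, AvoidsAt (A : Set α) E v j)
    (fun _ => ⟨blockPrefix_zero, fun j hj => absurd hj (Nat.not_lt_zero j)⟩)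
    fun _ _ hv => exists_avoiding_extension hcon A.finite_toSet hE (fun n => (hs n).2) hlarge hv.1 hv.2
  obtain ⟨z, hz⟩ := hlarge v fun l => (hv (l + 1)).1.extractedFin
  exact (inter_constSpan_eq_empty_of_avoidsAt fun j => (hv (j + 1)).2 j j.lt_succ_self).subset hz

open HJ in
/-- Lemma 2.10. -/
theorem stmt7 {α : Type*} (A : Finset α) (hA : A.Nonempty)
    (E : Set (List α)) (hE : E ⊆ WordsOver (A : Set α))
    (s : ℕ → List (Option α)) (hs : ∀ n, IsVarWord (A : Set α) (s n))
    (hlarge : IsLarge (fun _ => (A : Set α)) E s) :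
    ∃ m : ℕ, 1 ≤ m ∧
      ∃ w ∈ varSpan (fun _ => (A : Set α)) s (Set.Iio m),
        ∃ t : ℕ → List (Option α),
          Extracted (fun _ => (A : Set α)) (fun n => s (m + n)) t ∧
          IsLarge (fun _ => (A : Set α))
            (E ∩ wordQuot (A : Set α) E (substC w '' (A : Set α))) t :=
  stmt7_general A E hE s hs hlarge
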